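/- arXiv:2205.13655 — 3 statements merged into one kernel-verified Lean document; each statement's English description precedes it below -/
import Mathlib

section
/- Perturbed strong convexity (Lemma): let h : ℝ^d → ℝ be β-smooth and μ-convex with 0 ≤ μ ≤ β. Then for all x, y, z ∈ ℝ^d, ⟨∇h(x), z − y⟩ ≥ h(z) − h(y) + (μ/4)‖y − z‖² − β‖z − x‖². -/
/-!
Split `z - y = (z - x) + (x - y)`. Convexity at `x` bounds `⟪∇h x, x - y⟫` from below by
`h x - h y + (μ/2)‖x - y‖²`. For `⟪∇h x, z - x⟫`, apply convexity at `z` instead and pay for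
replacing `∇h z` by `∇h x` with smoothness and Cauchy–Schwarz, at a cost of `β‖z - x‖²`.
Finally `‖y - z‖² ≤ 2(‖x - y‖² + ‖z - x‖²)` merges the two quadratic gains into `(μ/4)‖y - z‖²`.
-/

open scoped InnerProductSpace

theorem real_inner_le_mul_norm_sq_of_norm_le {E : Type*} [NormedAddCommGroup E]
    [InnerProductSpace ℝ E] {u v : E} {β : ℝ} (huv : ‖u‖ ≤ β * ‖v‖) :
    ⟪u, v⟫_ℝ ≤ β * ‖v‖ ^ 2 :=
  calc ⟪u, v⟫_ℝ ≤ ‖u‖ * ‖v‖ := real_inner_le_norm u v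
    _ ≤ β * ‖v‖ * ‖v‖ := mul_le_mul_of_nonneg_right huv (norm_nonneg v)
    _ = β * ‖v‖ ^ 2 := by ring

theorem norm_sub_sq_le_two_mul {E : Type*} [SeminormedAddCommGroup E] (x y z : E) :
    ‖y - z‖ ^ 2 ≤ 2 * (‖x - y‖ ^ 2 + ‖z - x‖ ^ 2) :=
  calc ‖y - z‖ ^ 2 ≤ (‖x - y‖ + ‖z - x‖) ^ 2 := by
        gcongr
        rw [norm_sub_rev x y, norm_sub_rev z x]
        exact norm_sub_le_norm_sub_add_norm_sub y x z
    _ ≤ 2 * (‖x - y‖ ^ 2 + ‖z - x‖ ^ 2) := add_sq_le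

section Gradient

variable {E : Type*} [NormedAddCommGroup E] [InnerProductSpace ℝ E] [CompleteSpace E]
  {h : E → ℝ} {β μ : ℝ}

theorem le_inner_gradient_sub_of_smooth_of_convex
    (hsmooth : ∀ x y : E, ‖gradient h x - gradient h y‖ ≤ β * ‖x - y‖)
    (hconv : ∀ x y : E, ⟪gradient h x, y - x⟫_ℝ ≤ h y - h x - (μ / 2) * ‖x - y‖ ^ 2)
    (x z : E) :
    h z - h x + (μ / 2) * ‖z - x‖ ^ 2 - β * ‖z - x‖ ^ 2 ≤ ⟪gradient h x, z - x⟫_ℝ := by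
  have hconv_z : ⟪gradient h z, -(z - x)⟫_ℝ ≤ h x - h z - (μ / 2) * ‖z - x‖ ^ 2 := by
    simpa only [neg_sub] using hconv z x
  have hgap : ⟪gradient h z - gradient h x, z - x⟫_ℝ ≤ β * ‖z - x‖ ^ 2 :=
    real_inner_le_mul_norm_sq_of_norm_le (hsmooth z x)
  rw [inner_neg_right] at hconv_z
  rw [inner_sub_left] at hgap
  linarith

end Gradient

theorem perturbed_strong_convexity_general
    {E : Type*} [NormedAddCommGroup E] [InnerProductSpace ℝ E] [FiniteDimensional ℝ E]
    (h : E → ℝ) (β μ : ℝ) (hμ0 : 0 ≤ μ)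
    (hsmooth : ∀ x y : E, ‖gradient h x - gradient h y‖ ≤ β * ‖x - y‖)
    (hconv : ∀ x y : E, ⟪gradient h x, y - x⟫_ℝ ≤ h y - h x - (μ / 2) * ‖x - y‖ ^ 2) :
    ∀ x y z : E,
      ⟪gradient h x, z - y⟫_ℝ ≥ h z - h y + (μ / 4) * ‖y - z‖ ^ 2 - β * ‖z - x‖ ^ 2 := by
  intro x y z
  have hnear := le_inner_gradient_sub_of_smooth_of_convex hsmooth hconv x z
  have hfar : ⟪gradient h x, -(x - y)⟫_ℝ ≤ h y - h x - (μ / 2) * ‖x - y‖ ^ 2 := by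
    simpa only [neg_sub] using hconv x y
  have hsplit : ⟪gradient h x, z - y⟫_ℝ = ⟪gradient h x, z - x⟫_ℝ + ⟪gradient h x, x - y⟫_ℝ := by
    rw [← inner_add_right, sub_add_sub_cancel]
  have htri := mul_le_mul_of_nonneg_left (norm_sub_sq_le_two_mul x y z) hμ0
  rw [inner_neg_right] at hfar
  linarith

/-- Perturbed strong convexity (Lemma): if `h` is `β`-smooth and `μ`-convex with
`0 ≤ μ ≤ β`, then for all `x, y, z`,
`⟨∇h(x), z − y⟩ ≥ h(z) − h(y) + (μ/4)‖y − z‖² − β‖z − x‖²`. -/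
theorem perturbed_strong_convexity
    {E : Type*} [NormedAddCommGroup E] [InnerProductSpace ℝ E] [FiniteDimensional ℝ E]
    (h : E → ℝ) (β μ : ℝ) (hβ : 0 < β) (hμ0 : 0 ≤ μ) (hμβ : μ ≤ β)
    (hdiff : Differentiable ℝ h)
    (hsmooth : ∀ x y : E, ‖gradient h x - gradient h y‖ ≤ β * ‖x - y‖)
    (hconv : ∀ x y : E, ⟪gradient h x, y - x⟫_ℝ ≤ h y - h x - (μ / 2) * ‖x - y‖ ^ 2) :
    ∀ x y z : E,
      ⟪gradient h x, z - y⟫_ℝ ≥ h z - h y + (μ / 4) * ‖y - z‖ ^ 2 - β * ‖z - x‖ ^ 2 :=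
  perturbed_strong_convexity_general h β μ hμ0 hsmooth hconv
end

section
/- Contractive mapping (Lemma): let h : ℝ^d → ℝ be β-smooth and μ-convex with μ ≥ 0, and let the step size η satisfy 0 < η ≤ 1/β. Then for all x, y ∈ ℝ^d, ‖x − η∇h(x) − y + η∇h(y)‖² ≤ (1 − μη)‖x − y‖². -/
/-!
Write `g = ∇h`. Expanding the square, `‖x - y - η (g x - g y)‖²` equals
`‖x - y‖² - 2η⟪g x - g y, x - y⟫ + η²‖g x - g y‖²`. Summing the `μ`-convexity inequality at
`(x, y)` and at `(y, x)` gives strong monotonicity `μ‖x - y‖² ≤ ⟪g x - g y, x - y⟫`, and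
convexity together with the `β`-Lipschitz gradient gives co-coercivity
`‖g x - g y‖² / β ≤ ⟪g x - g y, x - y⟫`. Since `η ≤ 1/β`, co-coercivity absorbs the quadratic
term into half of the cross term, and strong monotonicity bounds the remaining `-η⟪…⟫`.
-/

open scoped InnerProductSpace

section GradientStep

variable {E : Type*} [NormedAddCommGroup E] [InnerProductSpace ℝ E]

theorem norm_sub_smul_sub_add_smul_sq (x y u v : E) (η : ℝ) :
    ‖x - η • u - y + η • v‖ ^ 2 =
      ‖x - y‖ ^ 2 - 2 * η * ⟪u - v, x - y⟫_ℝ + η ^ 2 * ‖u - v‖ ^ 2 := by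
  have hrw : x - η • u - y + η • v = (x - y) - η • (u - v) := by rw [smul_sub]; abel
  rw [hrw, norm_sub_sq_real, norm_smul, real_inner_smul_right, real_inner_comm,
    Real.norm_eq_abs, mul_pow, sq_abs]
  ring

variable [CompleteSpace E] {f : E → ℝ} {β μ : ℝ}

theorem hasDerivAt_comp_add_smul (hf : Differentiable ℝ f) (x v : E) (t : ℝ) :
    HasDerivAt (fun s : ℝ => f (x + s • v)) ⟪gradient f (x + t • v), v⟫_ℝ t := by
  have hline : HasDerivAt (fun s : ℝ => x + s • v) v t := by
    simpa using ((hasDerivAt_id t).smul_const v).const_add x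
  rw [inner_gradient_left]
  exact (hf _).hasFDerivAt.comp_hasDerivAt t hline

theorem le_add_inner_gradient_add_sq_of_lipschitz (hf : Differentiable ℝ f)
    (hL : ∀ x y, ‖gradient f x - gradient f y‖ ≤ β * ‖x - y‖) (x y : E) :
    f y ≤ f x + ⟪gradient f x, y - x⟫_ℝ + β / 2 * ‖y - x‖ ^ 2 := by
  set v := y - x
  let φ : ℝ → ℝ := fun t => f (x + t • v) - t * ⟪gradient f x, v⟫_ℝ - β / 2 * t ^ 2 * ‖v‖ ^ 2
  have hφ' : ∀ t, HasDerivAt φ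
      (⟪gradient f (x + t • v) - gradient f x, v⟫_ℝ - β * t * ‖v‖ ^ 2) t := by
    intro t
    refine (((hasDerivAt_comp_add_smul hf x v t).sub ((hasDerivAt_id t).mul_const _)).sub
      (((hasDerivAt_pow 2 t).const_mul (β / 2)).mul_const (‖v‖ ^ 2))).congr_deriv ?_
    rw [inner_sub_left]
    ring
  have hφ'_nonpos : ∀ t, 0 ≤ t →
      ⟪gradient f (x + t • v) - gradient f x, v⟫_ℝ - β * t * ‖v‖ ^ 2 ≤ 0 := by
    intro t ht
    have := calc
      ⟪gradient f (x + t • v) - gradient f x, v⟫_ℝ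
          ≤ ‖gradient f (x + t • v) - gradient f x‖ * ‖v‖ := real_inner_le_norm _ _
      _ ≤ β * ‖t • v‖ * ‖v‖ :=
          mul_le_mul_of_nonneg_right (by simpa using hL (x + t • v) x) (norm_nonneg v)
      _ = β * t * ‖v‖ ^ 2 := by rw [norm_smul, Real.norm_of_nonneg ht]; ring
    linarith
  have hanti : AntitoneOn φ (Set.Ici 0) :=
    antitoneOn_of_hasDerivWithinAt_nonpos (convex_Ici 0)
      (fun t _ => (hφ' t).continuousAt.continuousWithinAt)
      (fun t _ => (hφ' t).hasDerivWithinAt)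
      (fun t ht => hφ'_nonpos t (interior_subset ht))
  have h10 : φ 1 ≤ φ 0 := hanti Set.self_mem_Ici (Set.mem_Ici.2 zero_le_one) zero_le_one
  simp only [φ, v, one_smul, zero_smul, add_zero, add_sub_cancel, one_mul, zero_mul, one_pow,
    mul_one, sub_zero, ne_eq, OfNat.ofNat_ne_zero, not_false_eq_true, zero_pow] at h10
  linarith

theorem sq_norm_gradient_sub_div_le_of_lipschitz_of_convex (hβ : 0 < β)
    (hf : Differentiable ℝ f) (hL : ∀ x y, ‖gradient f x - gradient f y‖ ≤ β * ‖x - y‖)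
    (hconv : ∀ x y, ⟪gradient f x, y - x⟫_ℝ ≤ f y - f x) (x y : E) :
    ‖gradient f y - gradient f x‖ ^ 2 / (2 * β) ≤ f y - f x - ⟪gradient f x, y - x⟫_ℝ := by
  set Δ := gradient f y - gradient f x
  -- evaluate the descent lemma at `y` and convexity at `x` in the gradient step `z` from `y`
  set z := y - β⁻¹ • Δ
  have hdesc := le_add_inner_gradient_add_sq_of_lipschitz hf hL y z
  have hcvx := hconv x z
  have hzy : z - y = -(β⁻¹ • Δ) := by simp only [z]; abel
  have hzx : z - x = (y - x) - β⁻¹ • Δ := by simp only [z]; abel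
  have hΔ : ⟪gradient f y, Δ⟫_ℝ - ⟪gradient f x, Δ⟫_ℝ = ‖Δ‖ ^ 2 := by
    rw [← inner_sub_left, real_inner_self_eq_norm_sq]
  rw [hzy, inner_neg_right, real_inner_smul_right, norm_neg, norm_smul, Real.norm_eq_abs,
    abs_of_pos (inv_pos.2 hβ)] at hdesc
  rw [hzx, inner_sub_right, real_inner_smul_right] at hcvx
  have hquad : ‖Δ‖ ^ 2 / (2 * β) = β⁻¹ * ‖Δ‖ ^ 2 - β / 2 * (β⁻¹ * ‖Δ‖) ^ 2 := by
    field_simp; ring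
  rw [hquad]
  linear_combination hdesc + hcvx - β⁻¹ * hΔ

theorem inv_mul_sq_norm_gradient_sub_le_inner (hβ : 0 < β)
    (hf : Differentiable ℝ f) (hL : ∀ x y, ‖gradient f x - gradient f y‖ ≤ β * ‖x - y‖)
    (hconv : ∀ x y, ⟪gradient f x, y - x⟫_ℝ ≤ f y - f x) (x y : E) :
    β⁻¹ * ‖gradient f x - gradient f y‖ ^ 2 ≤ ⟪gradient f x - gradient f y, x - y⟫_ℝ := by
  have hxy := sq_norm_gradient_sub_div_le_of_lipschitz_of_convex hβ hf hL hconv x y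
  have hyx := sq_norm_gradient_sub_div_le_of_lipschitz_of_convex hβ hf hL hconv y x
  rw [norm_sub_rev] at hxy
  have hinner : ⟪gradient f x - gradient f y, x - y⟫_ℝ =
      -⟪gradient f x, y - x⟫_ℝ - ⟪gradient f y, x - y⟫_ℝ := by
    rw [inner_sub_left, ← inner_neg_right, neg_sub]
  rw [hinner]
  linear_combination hxy + hyx

theorem mul_sq_norm_sub_le_inner_gradient_sub
    (hconv : ∀ x y, ⟪gradient f x, y - x⟫_ℝ ≤ f y - f x - μ / 2 * ‖x - y‖ ^ 2) (x y : E) :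
    μ * ‖x - y‖ ^ 2 ≤ ⟪gradient f x - gradient f y, x - y⟫_ℝ := by
  have hxy := hconv x y
  have hyx := hconv y x
  rw [norm_sub_rev] at hyx
  have hinner : ⟪gradient f x - gradient f y, x - y⟫_ℝ =
      -⟪gradient f x, y - x⟫_ℝ - ⟪gradient f y, x - y⟫_ℝ := by
    rw [inner_sub_left, ← inner_neg_right, neg_sub]
  rw [hinner]
  linear_combination hxy + hyx

end GradientStep

/-- Contractive mapping (Lemma): if `h` is `β`-smooth and `μ`-convex with `μ ≥ 0`, and
`0 < η ≤ 1/β`, then for all `x, y`,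
`‖x − η∇h(x) − y + η∇h(y)‖² ≤ (1 − μη)‖x − y‖²`. -/
theorem contractive_mapping
    {E : Type*} [NormedAddCommGroup E] [InnerProductSpace ℝ E] [FiniteDimensional ℝ E]
    (h : E → ℝ) (β μ : ℝ) (hβ : 0 < β) (hμ0 : 0 ≤ μ)
    (hdiff : Differentiable ℝ h)
    (hsmooth : ∀ x y : E, ‖gradient h x - gradient h y‖ ≤ β * ‖x - y‖)
    (hconv : ∀ x y : E, ⟪gradient h x, y - x⟫_ℝ ≤ h y - h x - (μ / 2) * ‖x - y‖ ^ 2)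
    (η : ℝ) (hη0 : 0 < η) (hηβ : η ≤ 1 / β) :
    ∀ x y : E,
      ‖x - η • gradient h x - y + η • gradient h y‖ ^ 2 ≤ (1 - μ * η) * ‖x - y‖ ^ 2 := by
  intro x y
  have hconvex : ∀ x y : E, ⟪gradient h x, y - x⟫_ℝ ≤ h y - h x := fun x y =>
    (hconv x y).trans (sub_le_self _ (by positivity))
  have hstrong := mul_sq_norm_sub_le_inner_gradient_sub hconv x y
  have hcoco := inv_mul_sq_norm_gradient_sub_le_inner hβ hdiff hsmooth hconvex x y
  have hstep : η * ‖gradient h x - gradient h y‖ ^ 2 ≤ β⁻¹ * ‖gradient h x - gradient h y‖ ^ 2 :=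
    mul_le_mul_of_nonneg_right (one_div β ▸ hηβ) (sq_nonneg _)
  rw [norm_sub_smul_sub_add_smul_sq]
  nlinarith [mul_le_mul_of_nonneg_left hstrong hη0.le,
    mul_le_mul_of_nonneg_left (hstep.trans hcoco) hη0.le]
end

section
/- Bound on the variance of the server update (Lemma): in one round of 1-way Gradient Transfer, if F_f is β-smooth, then E‖x⁺ − x‖² ≤ 4 η̃² β² ℰ + 2 η̃² ((2/(K S)) σ² + σ_c²) + 2 η̃² ‖∇f(x)‖². -/
/-!
Write `N = K S`. Summing the client updates, `(N / η̃) (x - x⁺)` splits as `A + B + N W` with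
`A = ∑ (g_i^k - ∇F_f(x_i^{k-1}))`, `B = ∑ (∇F_f(x_i^{k-1}) - ∇F_f(x))` and
`W = g_c - ∇F_c(x) + ∇f(x)`, and `‖A + B + N W‖² ≤ 4‖A‖² + 4‖B‖² + 2N²‖W‖²`.
The summands of `A` form a martingale difference sequence for the lexicographic order of the
pairs `(k, i)`, so they are orthogonal in `L²` and `E‖A‖² ≤ N σ²`. Smoothness and Cauchy–Schwarz
give `E‖B‖² ≤ N β² ∑ E‖x_i^{k-1} - x‖² = N² β² ℰ`, and since `g_c - ∇F_c(x)` is centred,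
`E‖W‖² ≤ σ_c² + ‖∇f(x)‖²`.
-/

open MeasureTheory

/-- The σ-algebra generated by the centralized stochastic gradient `gc` together with all
client stochastic gradients `g j l` strictly preceding `g i k` in the lexicographic order
of the pairs `(k, i)` (step index first, then client index). -/
noncomputable def mixedFLPast {Ω E : Type*} [MeasurableSpace Ω]
    [NormedAddCommGroup E] [InnerProductSpace ℝ E] [MeasurableSpace E]
    {S K : ℕ} (gc : Ω → E) (g : Fin S → Fin K → Ω → E) (i : Fin S) (k : Fin K) :
    MeasurableSpace Ω :=
  MeasurableSpace.comap gc inferInstance ⊔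
    ⨆ (p : Fin S × Fin K)
      (_ : (p.2 : ℕ) < (k : ℕ) ∨ ((p.2 : ℕ) = (k : ℕ) ∧ (p.1 : ℕ) < (i : ℕ))),
      MeasurableSpace.comap (g p.1 p.2) inferInstance

open scoped InnerProductSpace

theorem norm_add_sq_le_two_mul {E : Type*} [SeminormedAddCommGroup E] (u v : E) :
    ‖u + v‖ ^ 2 ≤ 2 * (‖u‖ ^ 2 + ‖v‖ ^ 2) :=
  (pow_le_pow_left₀ (norm_nonneg _) (norm_add_le u v) 2).trans add_sq_le

theorem norm_sum_sq_le_card_mul {ι E : Type*} [SeminormedAddCommGroup E] (s : Finset ι)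
    (v : ι → E) : ‖∑ i ∈ s, v i‖ ^ 2 ≤ s.card * ∑ i ∈ s, ‖v i‖ ^ 2 :=
  (pow_le_pow_left₀ (norm_nonneg _) (norm_sum_le s v) 2).trans sq_sum_le_card_mul_sum_sq

theorem sum_sum_add_const_eq {ι κ V : Type*} [Fintype ι] [Fintype κ] [AddCommGroup V]
    [Module ℝ V] (g G : ι → κ → V) (c v : V) :
    ∑ i, ∑ k, (g i k + c)
      = ∑ i, ∑ k, (g i k - G i k) + ∑ i, ∑ k, (G i k - v)
        + ((Fintype.card κ * Fintype.card ι : ℕ) : ℝ) • (c + v) := by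
  have hterm : ∀ i k, g i k + c = (g i k - G i k) + (G i k - v) + (c + v) := fun i k => by abel
  simp only [hterm, Finset.sum_add_distrib, Finset.sum_const, Finset.card_univ, smul_smul,
    mul_comm (Fintype.card ι), Nat.cast_smul_eq_nsmul, smul_add]

theorem gradient_fun_add {F : Type*} [NormedAddCommGroup F] [InnerProductSpace ℝ F]
    [CompleteSpace F] {f h : F → ℝ} {x : F} (hf : DifferentiableAt ℝ f x)
    (hh : DifferentiableAt ℝ h x) :
    gradient (fun y => f y + h y) x = gradient f x + gradient h x := by
  simp only [gradient, fderiv_fun_add hf hh, map_add]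

section SquareIntegrable

variable {Ω E : Type*} [NormedAddCommGroup E] {m0 : MeasurableSpace Ω} {μ : Measure Ω}
  [IsFiniteMeasure μ]

theorem LipschitzWith.comp_memLp_of_isFiniteMeasure {F : Type*} [NormedAddCommGroup F]
    {G : E → F} {L : NNReal} (hG : LipschitzWith L G) {p : ENNReal} {Y : Ω → E}
    (hY : MemLp Y p μ) : MemLp (fun ω => G (Y ω)) p μ := by
  convert ((hG.sub (LipschitzWith.const (G 0))).comp_memLp (by simp) hY).add
    (memLp_const (G 0)) using 1
  funext ω
  simp

theorem integral_norm_add_add_sq_le {U V W : Ω → E} (hU : MemLp U 2 μ) (hV : MemLp V 2 μ)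
    (hW : MemLp W 2 μ) :
    ∫ ω, ‖U ω + V ω + W ω‖ ^ 2 ∂μ
      ≤ 4 * ∫ ω, ‖U ω‖ ^ 2 ∂μ + 4 * ∫ ω, ‖V ω‖ ^ 2 ∂μ + 2 * ∫ ω, ‖W ω‖ ^ 2 ∂μ := by
  have hU2 := (hU.integrable_norm_pow' (p := 2)).const_mul 4
  have hV2 := (hV.integrable_norm_pow' (p := 2)).const_mul 4
  have hW2 := (hW.integrable_norm_pow' (p := 2)).const_mul 2
  calc ∫ ω, ‖U ω + V ω + W ω‖ ^ 2 ∂μ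
      ≤ ∫ ω, (4 * ‖U ω‖ ^ 2 + 4 * ‖V ω‖ ^ 2 + 2 * ‖W ω‖ ^ 2) ∂μ := by
        refine integral_mono (((hU.add hV).add hW).integrable_norm_pow' (p := 2))
          ((hU2.add hV2).add hW2) fun ω => ?_
        have h1 := norm_add_sq_le_two_mul (U ω + V ω) (W ω)
        have h2 := norm_add_sq_le_two_mul (U ω) (V ω)
        dsimp only [Pi.add_apply]
        linarith
    _ = _ := by
        rw [integral_add _ hW2, integral_add hU2 hV2, integral_const_mul,
          integral_const_mul, integral_const_mul]
        exact hU2.add hV2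

theorem integral_norm_sum_sub_sq_le {ι F : Type*} [NormedAddCommGroup F] (s : Finset ι)
    {G : E → F} {β : ℝ} (hG : ∀ y z, ‖G y - G z‖ ≤ β * ‖y - z‖) {Y : ι → Ω → E}
    (hY : ∀ i, MemLp (Y i) 2 μ) (x : E) :
    ∫ ω, ‖∑ i ∈ s, (G (Y i ω) - G x)‖ ^ 2 ∂μ
      ≤ s.card * β ^ 2 * ∑ i ∈ s, ∫ ω, ‖Y i ω - x‖ ^ 2 ∂μ := by
  have hint : ∀ i, Integrable (fun ω => ‖Y i ω - x‖ ^ 2) μ :=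
    fun i => ((hY i).sub (memLp_const x)).integrable_norm_pow' (p := 2)
  have hpoint : ∀ ω, ‖∑ i ∈ s, (G (Y i ω) - G x)‖ ^ 2
      ≤ s.card * β ^ 2 * ∑ i ∈ s, ‖Y i ω - x‖ ^ 2 := fun ω => by
    rw [mul_assoc, Finset.mul_sum]
    refine (norm_sum_sq_le_card_mul s _).trans (mul_le_mul_of_nonneg_left
      (Finset.sum_le_sum fun i _ => ?_) (Nat.cast_nonneg _))
    simpa only [mul_pow] using pow_le_pow_left₀ (norm_nonneg _) (hG (Y i ω) x) 2
  calc ∫ ω, ‖∑ i ∈ s, (G (Y i ω) - G x)‖ ^ 2 ∂μ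
      ≤ ∫ ω, s.card * β ^ 2 * ∑ i ∈ s, ‖Y i ω - x‖ ^ 2 ∂μ :=
        integral_mono_of_nonneg (ae_of_all _ fun _ => by positivity)
          ((integrable_finsetSum s fun i _ => hint i).const_mul _) (ae_of_all _ hpoint)
    _ = s.card * β ^ 2 * ∑ i ∈ s, ∫ ω, ‖Y i ω - x‖ ^ 2 ∂μ := by
        rw [integral_const_mul, integral_finsetSum s fun i _ => hint i]

end SquareIntegrable

section Hilbert

variable {Ω E : Type*} [NormedAddCommGroup E] [InnerProductSpace ℝ E]
  {m m0 : MeasurableSpace Ω} {μ : Measure Ω}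

theorem MeasureTheory.MemLp.integrable_inner {Y Z : Ω → E} (hY : MemLp Y 2 μ)
    (hZ : MemLp Z 2 μ) : Integrable (fun ω => ⟪Y ω, Z ω⟫_ℝ) μ :=
  memLp_one_iff_integrable.1 ((innerSL ℝ).memLp_of_bilin 1 hY hZ)

theorem integral_inner_eq_zero_of_condExp_eq_zero [CompleteSpace E] (hm : m ≤ m0)
    [SigmaFinite (μ.trim hm)] {Y Z : Ω → E} (hY : StronglyMeasurable[m] Y)
    (hYZ : Integrable (fun ω => ⟪Y ω, Z ω⟫_ℝ) μ) (hZ : Integrable Z μ) (hZm : μ[Z|m] =ᵐ[μ] 0) :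
    ∫ ω, ⟪Y ω, Z ω⟫_ℝ ∂μ = 0 := by
  have hpull : μ[fun ω => ⟪Y ω, Z ω⟫_ℝ|m] =ᵐ[μ] fun ω => ⟪Y ω, μ[Z|m] ω⟫_ℝ :=
    condExp_bilin_of_stronglyMeasurable_left (innerSL ℝ) hY hYZ hZ
  replace hpull : μ[fun ω => ⟪Y ω, Z ω⟫_ℝ|m] =ᵐ[μ] 0 := by
    filter_upwards [hpull, hZm] with ω h hω
    simp [h, hω]
  rw [← integral_condExp hm, integral_congr_ae hpull, Pi.zero_def, integral_zero]

theorem integral_norm_sum_sq_of_pairwise_integral_inner_eq_zero {ι : Type*} (s : Finset ι)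
    {a : ι → Ω → E} (ha : ∀ i, MemLp (a i) 2 μ)
    (horth : Pairwise fun i j => ∫ ω, ⟪a i ω, a j ω⟫_ℝ ∂μ = 0) :
    ∫ ω, ‖∑ i ∈ s, a i ω‖ ^ 2 ∂μ = ∑ i ∈ s, ∫ ω, ‖a i ω‖ ^ 2 ∂μ := by
  have hint : ∀ i j, Integrable (fun ω => ⟪a i ω, a j ω⟫_ℝ) μ :=
    fun i j => (ha i).integrable_inner (ha j)
  simp_rw [← real_inner_self_eq_norm_sq, sum_inner, inner_sum]
  rw [integral_finsetSum _ fun i _ => integrable_finsetSum _ fun j _ => hint i j]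
  refine Finset.sum_congr rfl fun i hi => ?_
  rw [integral_finsetSum _ fun j _ => hint i j,
    Finset.sum_eq_single_of_mem i hi fun j _ hji => horth hji.symm]

theorem integral_le_of_condExp_le [IsProbabilityMeasure μ] (hm : m ≤ m0) {f : Ω → ℝ} {c : ℝ}
    (hf : ∀ᵐ ω ∂μ, μ[f|m] ω ≤ c) : ∫ ω, f ω ∂μ ≤ c := by
  rw [← integral_condExp hm]
  simpa using integral_mono_ae integrable_condExp (integrable_const c) hf

theorem condExp_sub_ae_eq_zero [CompleteSpace E] (hm : m ≤ m0) [SigmaFinite (μ.trim hm)]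
    {f h : Ω → E} (hf : Integrable f μ) (hh : StronglyMeasurable[m] h) (hhi : Integrable h μ)
    (hfh : μ[f|m] =ᵐ[μ] h) : μ[f - h|m] =ᵐ[μ] 0 := by
  filter_upwards [condExp_sub hf hhi m, hfh] with ω hsub hω
  simp [hsub, hω, condExp_of_stronglyMeasurable hm hh hhi]

theorem integral_norm_sub_integral_add_sq [CompleteSpace E] [IsProbabilityMeasure μ]
    {Y : Ω → E} (hY : MemLp Y 2 μ) (v : E) :
    ∫ ω, ‖Y ω - ∫ ω', Y ω' ∂μ + v‖ ^ 2 ∂μ = ∫ ω, ‖Y ω - ∫ ω', Y ω' ∂μ‖ ^ 2 ∂μ + ‖v‖ ^ 2 := by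
  have hZ : MemLp (fun ω => Y ω - ∫ ω', Y ω' ∂μ) 2 μ := hY.sub (memLp_const _)
  have hZ1 := hZ.integrable one_le_two
  have hZ2 := hZ.integrable_norm_pow' (p := 2)
  have hinner : ∫ ω, ⟪Y ω - ∫ ω', Y ω' ∂μ, v⟫_ℝ ∂μ = 0 := by
    simp_rw [real_inner_comm v]
    refine (integral_inner hZ1 v).trans ?_
    rw [integral_sub (hY.integrable one_le_two) (integrable_const _)]
    simp
  simp_rw [norm_add_sq_real]
  rw [integral_add _ (integrable_const _), integral_add hZ2 ((hZ1.inner_const v).const_mul 2),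
    integral_const_mul, hinner]
  · simp
  · exact hZ2.add ((hZ1.inner_const v).const_mul 2)

end Hilbert

section LocalIterates

variable {Ω E : Type*} [MeasurableSpace Ω] [NormedAddCommGroup E] [NormedSpace ℝ E]
  {S K : ℕ} {gc : Ω → E} {g : Fin S → Fin K → Ω → E} {x : E} {η : ℝ} {X : Fin S → ℕ → Ω → E}

theorem memLp_iterate {μ : Measure Ω} [IsFiniteMeasure μ] (hX0 : ∀ i, X i 0 = fun _ => x)
    (hXstep : ∀ i (k : Fin K), X i ((k : ℕ) + 1) = fun ω => X i (k : ℕ) ω - η • (g i k ω + gc ω))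
    (hgc : MemLp gc 2 μ) (hg : ∀ i k, MemLp (g i k) 2 μ) (i : Fin S) {n : ℕ} (hn : n ≤ K) :
    MemLp (X i n) 2 μ := by
  induction n with
  | zero => rw [hX0 i]; exact memLp_const x
  | succ n ih =>
    rw [hXstep i ⟨n, hn⟩]
    exact (ih (Nat.le_of_succ_le hn)).sub (((hg i ⟨n, hn⟩).add hgc).const_smul η)

end LocalIterates

section mixedFLPast

variable {Ω E : Type*} [mΩ : MeasurableSpace Ω] [NormedAddCommGroup E] [InnerProductSpace ℝ E]
  [MeasurableSpace E] {S K : ℕ} {gc : Ω → E} {g : Fin S → Fin K → Ω → E}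

theorem mixedFLPast_le (hgc : Measurable gc) (hg : ∀ i k, Measurable (g i k)) (i : Fin S)
    (k : Fin K) : mixedFLPast gc g i k ≤ mΩ :=
  sup_le hgc.comap_le (iSup₂_le fun p _ => (hg p.1 p.2).comap_le)

theorem measurable_mixedFLPast_gc (i : Fin S) (k : Fin K) :
    Measurable[mixedFLPast gc g i k] gc :=
  measurable_iff_comap_le.2 le_sup_left

theorem measurable_mixedFLPast_of_lex {i j : Fin S} {k l : Fin K}
    (h : (l : ℕ) < k ∨ (l : ℕ) = k ∧ (j : ℕ) < i) : Measurable[mixedFLPast gc g i k] (g j l) :=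
  measurable_iff_comap_le.2 <| le_sup_right.trans' <|
    le_iSup₂ (f := fun (p : Fin S × Fin K) (_ : (p.2 : ℕ) < k ∨ (p.2 : ℕ) = k ∧ (p.1 : ℕ) < i) =>
      MeasurableSpace.comap (g p.1 p.2) inferInstance) (j, l) h

variable [BorelSpace E] [SecondCountableTopology E] {x : E} {η : ℝ} {X : Fin S → ℕ → Ω → E}

theorem measurable_mixedFLPast_iterate (hX0 : ∀ i, X i 0 = fun _ => x)
    (hXstep : ∀ i (k : Fin K), X i ((k : ℕ) + 1) = fun ω => X i (k : ℕ) ω - η • (g i k ω + gc ω))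
    (i j : Fin S) (l : Fin K) {n : ℕ} (hn : n ≤ l) :
    Measurable[mixedFLPast gc g j l] (X i n) := by
  induction n with
  | zero => rw [hX0 i]; exact measurable_const
  | succ n ih =>
    have hnl : n < l := hn
    rw [hXstep i ⟨n, hnl.trans l.2⟩]
    exact (ih hnl.le).sub (((measurable_mixedFLPast_of_lex (Or.inl hnl)).add
      (measurable_mixedFLPast_gc j l)).const_smul η)

theorem integral_inner_noise_eq_zero_of_lex {μ : Measure Ω} [IsProbabilityMeasure μ]
    [CompleteSpace E] {G : E → E} {L : NNReal} (hG : LipschitzWith L G)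
    (hgc : Measurable gc) (hg : ∀ i k, Measurable (g i k)) (hX0 : ∀ i, X i 0 = fun _ => x)
    (hXstep : ∀ i (k : Fin K), X i ((k : ℕ) + 1) = fun ω => X i (k : ℕ) ω - η • (g i k ω + gc ω))
    (hgL2 : ∀ i k, MemLp (g i k) 2 μ) (hXL2 : ∀ i (k : Fin K), MemLp (X i k) 2 μ)
    (hmean : ∀ i k, μ[g i k | mixedFLPast gc g i k] =ᵐ[μ] fun ω => G (X i (k : ℕ) ω))
    {i j : Fin S} {k l : Fin K} (h : (l : ℕ) < k ∨ (l : ℕ) = k ∧ (j : ℕ) < i) :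
    ∫ ω, ⟪g j l ω - G (X j l ω), g i k ω - G (X i k ω)⟫_ℝ ∂μ = 0 := by
  have hm := mixedFLPast_le hgc hg i k
  have hGX : ∀ (j : Fin S) (l : Fin K), (l : ℕ) ≤ k →
      Measurable[mixedFLPast gc g i k] fun ω => G (X j l ω) := fun j l hl =>
    hG.continuous.measurable.comp (measurable_mixedFLPast_iterate hX0 hXstep j i k hl)
  have hGXL2 : ∀ (j : Fin S) (l : Fin K), MemLp (fun ω => G (X j l ω)) 2 μ :=
    fun j l => hG.comp_memLp_of_isFiniteMeasure (hXL2 j l)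
  refine integral_inner_eq_zero_of_condExp_eq_zero hm
    ((measurable_mixedFLPast_of_lex h).sub (hGX j l (by omega))).stronglyMeasurable
    (((hgL2 j l).sub (hGXL2 j l)).integrable_inner ((hgL2 i k).sub (hGXL2 i k)))
    (((hgL2 i k).sub (hGXL2 i k)).integrable one_le_two) ?_
  exact condExp_sub_ae_eq_zero hm ((hgL2 i k).integrable one_le_two)
    (hGX i k le_rfl).stronglyMeasurable ((hGXL2 i k).integrable one_le_two) (hmean i k)

theorem integral_norm_sum_noise_sq_le {μ : Measure Ω} [IsProbabilityMeasure μ]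
    [CompleteSpace E] {G : E → E} {L : NNReal} (hG : LipschitzWith L G)
    (hgc : Measurable gc) (hg : ∀ i k, Measurable (g i k)) (hX0 : ∀ i, X i 0 = fun _ => x)
    (hXstep : ∀ i (k : Fin K), X i ((k : ℕ) + 1) = fun ω => X i (k : ℕ) ω - η • (g i k ω + gc ω))
    (hgL2 : ∀ i k, MemLp (g i k) 2 μ) (hXL2 : ∀ i (k : Fin K), MemLp (X i k) 2 μ)
    (hmean : ∀ i k, μ[g i k | mixedFLPast gc g i k] =ᵐ[μ] fun ω => G (X i (k : ℕ) ω))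
    {σ : ℝ} (hvar : ∀ i k, ∀ᵐ ω ∂μ,
      (μ[(fun ω' => ‖g i k ω' - G (X i (k : ℕ) ω')‖ ^ 2) | mixedFLPast gc g i k]) ω ≤ σ ^ 2) :
    ∫ ω, ‖∑ i, ∑ k, (g i k ω - G (X i k ω))‖ ^ 2 ∂μ ≤ K * S * σ ^ 2 := by
  have hlex : Pairwise fun (p q : Fin S × Fin K) =>
      ∫ ω, ⟪g p.1 p.2 ω - G (X p.1 p.2 ω), g q.1 q.2 ω - G (X q.1 q.2 ω)⟫_ℝ ∂μ = 0 := by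
    rintro ⟨i, k⟩ ⟨j, l⟩ hne
    have horder : ((l : ℕ) < k ∨ (l : ℕ) = k ∧ (j : ℕ) < i)
        ∨ ((k : ℕ) < l ∨ (k : ℕ) = l ∧ (i : ℕ) < j) := by
      simp only [ne_eq, Prod.mk.injEq, Fin.ext_iff] at hne
      omega
    rcases horder with h | h
    · simpa only [real_inner_comm] using
        integral_inner_noise_eq_zero_of_lex hG hgc hg hX0 hXstep hgL2 hXL2 hmean h
    · exact integral_inner_noise_eq_zero_of_lex hG hgc hg hX0 hXstep hgL2 hXL2 hmean h
  simp_rw [← Fintype.sum_prod_type']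
  rw [integral_norm_sum_sq_of_pairwise_integral_inner_eq_zero
    (a := fun (p : Fin S × Fin K) ω => g p.1 p.2 ω - G (X p.1 p.2 ω)) _
    (fun p => (hgL2 p.1 p.2).sub (hG.comp_memLp_of_isFiniteMeasure (hXL2 p.1 p.2))) hlex]
  calc ∑ p : Fin S × Fin K, ∫ ω, ‖g p.1 p.2 ω - G (X p.1 p.2 ω)‖ ^ 2 ∂μ
      ≤ ∑ _p : Fin S × Fin K, σ ^ 2 := Finset.sum_le_sum fun p _ =>
        integral_le_of_condExp_le (mixedFLPast_le hgc hg p.1 p.2) (hvar p.1 p.2)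
    _ = K * S * σ ^ 2 := by simp [mul_comm]

theorem integral_norm_sum_client_update_sq_le {μ : Measure Ω} [IsProbabilityMeasure μ]
    [CompleteSpace E] {G : E → E} {β : ℝ} (hG : ∀ y z, ‖G y - G z‖ ≤ β * ‖y - z‖)
    (hgc : Measurable gc) (hg : ∀ i k, Measurable (g i k)) (hgcL2 : MemLp gc 2 μ)
    (hgL2 : ∀ i k, MemLp (g i k) 2 μ) (hX0 : ∀ i, X i 0 = fun _ => x)
    (hXstep : ∀ i (k : Fin K), X i ((k : ℕ) + 1) = fun ω => X i (k : ℕ) ω - η • (g i k ω + gc ω))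
    (hmean : ∀ i k, μ[g i k | mixedFLPast gc g i k] =ᵐ[μ] fun ω => G (X i (k : ℕ) ω))
    {σ : ℝ} (hvar : ∀ i k, ∀ᵐ ω ∂μ,
      (μ[(fun ω' => ‖g i k ω' - G (X i (k : ℕ) ω')‖ ^ 2) | mixedFLPast gc g i k]) ω ≤ σ ^ 2)
    {σc : ℝ} (hgcvar : ∫ ω, ‖gc ω - ∫ ω', gc ω' ∂μ‖ ^ 2 ∂μ ≤ σc ^ 2) :
    ∫ ω, ‖∑ i, ∑ k, (g i k ω + gc ω)‖ ^ 2 ∂μ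
      ≤ 4 * (K * S * σ ^ 2) + 4 * (K * S * β ^ 2 * ∑ i, ∑ k : Fin K, ∫ ω, ‖X i k ω - x‖ ^ 2 ∂μ)
        + 2 * ((K * S) ^ 2 * (σc ^ 2 + ‖G x + ∫ ω, gc ω ∂μ‖ ^ 2)) := by
  have hGL : LipschitzWith (Real.toNNReal β) G :=
    LipschitzWith.of_dist_le' fun y z => by simpa only [dist_eq_norm] using hG y z
  have hXL2 : ∀ i (k : Fin K), MemLp (X i k) 2 μ :=
    fun i k => memLp_iterate hX0 hXstep hgcL2 hgL2 i k.2.le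
  have hGX : ∀ i (k : Fin K), MemLp (fun ω => G (X i k ω)) 2 μ :=
    fun i k => hGL.comp_memLp_of_isFiniteMeasure (hXL2 i k)
  set N : ℝ := K * S
  set A := fun ω => ∑ i, ∑ k : Fin K, (g i k ω - G (X i k ω))
  set B := fun ω => ∑ i, ∑ k : Fin K, (G (X i k ω) - G x)
  set W := fun ω => gc ω + G x
  have hsplit : ∀ ω, ∑ i, ∑ k, (g i k ω + gc ω) = A ω + B ω + N • W ω := fun ω => by
    simpa only [Fintype.card_fin, Nat.cast_mul] using
      sum_sum_add_const_eq (fun i k => g i k ω) (fun i k => G (X i k ω)) (gc ω) (G x)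
  have hAL2 : MemLp A 2 μ := memLp_finsetSum _ fun i _ => memLp_finsetSum _ fun k _ =>
    (hgL2 i k).sub (hGX i k)
  have hBL2 : MemLp B 2 μ := memLp_finsetSum _ fun i _ => memLp_finsetSum _ fun k _ =>
    (hGX i k).sub (memLp_const _)
  have hWL2 : MemLp W 2 μ := hgcL2.add (memLp_const _)
  simp_rw [hsplit]
  refine (integral_norm_add_add_sq_le hAL2 hBL2 (hWL2.const_smul _)).trans ?_
  simp_rw [Pi.smul_apply, norm_smul, mul_pow, Real.norm_eq_abs, sq_abs]
  rw [integral_const_mul]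
  gcongr
  · exact integral_norm_sum_noise_sq_le hGL hgc hg hX0 hXstep hgL2 hXL2 hmean hvar
  · have h := integral_norm_sum_sub_sq_le (Y := fun (p : Fin S × Fin K) => X p.1 p.2)
      Finset.univ hG (fun p => hXL2 p.1 p.2) x
    simp only [Finset.card_univ, Fintype.card_prod, Fintype.card_fin, Nat.cast_mul,
      Fintype.sum_prod_type, mul_comm (S : ℝ)] at h
    exact h
  · simp_rw [W, ← sub_add_add_cancel _ (G x) (∫ ω, gc ω ∂μ)]
    exact (integral_norm_sub_integral_add_sq hgcL2 _).trans_le (add_le_add hgcvar le_rfl)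

end mixedFLPast

theorem owgt_variance_of_server_update_general
    {E : Type*} [NormedAddCommGroup E] [InnerProductSpace ℝ E] [FiniteDimensional ℝ E]
    [MeasurableSpace E] [BorelSpace E]
    {Ω : Type*} [MeasurableSpace Ω] (μ : Measure Ω) [IsProbabilityMeasure μ]
    -- current model, local steps, cohort size, learning rates, effective step size
    (x : E) (K S : ℕ)
    (η ηt : ℝ)
    -- federated and centralized losses
    (Ff Fc : E → ℝ) (hFf_diff : Differentiable ℝ Ff) (hFc_diff : Differentiable ℝ Fc)
    (β σ σc : ℝ)
    -- centralized stochastic gradient: mean ∇F_c(x), variance at most σc²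
    (gc : Ω → E) (hgc_meas : Measurable gc) (hgc_L2 : MemLp gc 2 μ)
    (hgc_mean : ∫ ω, gc ω ∂μ = gradient Fc x)
    (hgc_var : ∫ ω, ‖gc ω - gradient Fc x‖ ^ 2 ∂μ ≤ σc ^ 2)
    -- client stochastic gradients
    (g : Fin S → Fin K → Ω → E)
    (hg_meas : ∀ i k, Measurable (g i k)) (hg_L2 : ∀ i k, MemLp (g i k) 2 μ)
    -- local iterates: x_i^0 = x and x_i^{k+1} = x_i^k − η (g_i^{k+1} + g_c)
    (X : Fin S → ℕ → Ω → E)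
    (hX0 : ∀ i, X i 0 = fun _ => x)
    (hXstep : ∀ i (k : Fin K),
      X i ((k : ℕ) + 1) = fun ω => X i (k : ℕ) ω - η • (g i k ω + gc ω))
    -- conditionally on the past, g i k has mean ∇F_f(x_i^k) and variance at most σ²
    (hg_condmean : ∀ i k,
      μ[g i k | mixedFLPast gc g i k] =ᵐ[μ] fun ω => gradient Ff (X i (k : ℕ) ω))
    (hg_condvar : ∀ i k, ∀ᵐ ω ∂μ,
      (μ[(fun ω' => ‖g i k ω' - gradient Ff (X i (k : ℕ) ω')‖ ^ 2) |
          mixedFLPast gc g i k]) ω ≤ σ ^ 2)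
    -- server update
    (xplus : Ω → E)
    (hxplus : xplus = fun ω =>
      x - (ηt / ((K : ℝ) * (S : ℝ))) • ∑ i : Fin S, ∑ k : Fin K, (g i k ω + gc ω))
    -- client drift
    (drift : ℝ)
    (hdrift : drift = (1 / ((K : ℝ) * (S : ℝ))) *
      ∑ i : Fin S, ∑ k : Fin K, ∫ ω, ‖X i (k : ℕ) ω - x‖ ^ 2 ∂μ)
    -- smoothness of the federated loss
    (hFf_smooth : ∀ y z : E, ‖gradient Ff y - gradient Ff z‖ ≤ β * ‖y - z‖) :
    ∫ ω, ‖xplus ω - x‖ ^ 2 ∂μ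
      ≤ 4 * ηt ^ 2 * β ^ 2 * drift
        + 2 * ηt ^ 2 * ((2 / ((K : ℝ) * (S : ℝ))) * σ ^ 2 + σc ^ 2)
        + 2 * ηt ^ 2 * ‖gradient (fun y => Ff y + Fc y) x‖ ^ 2 := by
  have hmoment := integral_norm_sum_client_update_sq_le hFf_smooth hgc_meas hg_meas hgc_L2
    hg_L2 hX0 hXstep hg_condmean hg_condvar (by rwa [hgc_mean])
  rw [hgc_mean, ← gradient_fun_add (hFf_diff x) (hFc_diff x)] at hmoment
  set N : ℝ := K * S
  have hscale : ∫ ω, ‖xplus ω - x‖ ^ 2 ∂μ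
      = (ηt / N) ^ 2 * ∫ ω, ‖∑ i, ∑ k, (g i k ω + gc ω)‖ ^ 2 ∂μ := by
    simp_rw [hxplus, sub_sub_cancel_left, norm_neg, norm_smul, mul_pow, Real.norm_eq_abs, sq_abs]
    exact integral_const_mul _ _
  rw [hscale, hdrift]
  refine (mul_le_mul_of_nonneg_left hmoment (sq_nonneg _)).trans ?_
  rcases (show (0 : ℝ) ≤ N by positivity).eq_or_lt with hN0 | hNpos
  -- `K S = 0`: with `x / 0 = 0` the left side vanishes
  · rw [← hN0, div_zero, zero_pow two_ne_zero, zero_mul]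
    positivity
  · exact le_of_eq (by field_simp; ring)

/-- Bound on the variance of the server update (Lemma): in one round of 1-way Gradient
Transfer, if `F_f` is `β`-smooth, then
`E‖x⁺ − x‖² ≤ 4η̃²β²ℰ + 2η̃²((2/(KS))σ² + σc²) + 2η̃²‖∇f(x)‖²`. -/
theorem owgt_variance_of_server_update
    {E : Type*} [NormedAddCommGroup E] [InnerProductSpace ℝ E] [FiniteDimensional ℝ E]
    [MeasurableSpace E] [BorelSpace E]
    {Ω : Type*} [MeasurableSpace Ω] (μ : Measure Ω) [IsProbabilityMeasure μ]
    -- current model, local steps, cohort size, learning rates, effective step size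
    (x : E) (K S : ℕ) (hK : 1 ≤ K) (hS : 1 ≤ S)
    (η ηs ηt : ℝ) (hη : 0 < η) (hηs : 0 < ηs) (hηt : ηt = (K : ℝ) * ηs * η)
    -- federated and centralized losses
    (Ff Fc : E → ℝ) (hFf_diff : Differentiable ℝ Ff) (hFc_diff : Differentiable ℝ Fc)
    (β σ σc : ℝ) (hβ : 0 < β)
    -- centralized stochastic gradient: mean ∇F_c(x), variance at most σc²
    (gc : Ω → E) (hgc_meas : Measurable gc) (hgc_L2 : MemLp gc 2 μ)
    (hgc_mean : ∫ ω, gc ω ∂μ = gradient Fc x)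
    (hgc_var : ∫ ω, ‖gc ω - gradient Fc x‖ ^ 2 ∂μ ≤ σc ^ 2)
    -- client stochastic gradients
    (g : Fin S → Fin K → Ω → E)
    (hg_meas : ∀ i k, Measurable (g i k)) (hg_L2 : ∀ i k, MemLp (g i k) 2 μ)
    -- local iterates: x_i^0 = x and x_i^{k+1} = x_i^k − η (g_i^{k+1} + g_c)
    (X : Fin S → ℕ → Ω → E)
    (hX0 : ∀ i, X i 0 = fun _ => x)
    (hXstep : ∀ i (k : Fin K),
      X i ((k : ℕ) + 1) = fun ω => X i (k : ℕ) ω - η • (g i k ω + gc ω))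
    -- conditionally on the past, g i k has mean ∇F_f(x_i^k) and variance at most σ²
    (hg_condmean : ∀ i k,
      μ[g i k | mixedFLPast gc g i k] =ᵐ[μ] fun ω => gradient Ff (X i (k : ℕ) ω))
    (hg_condvar : ∀ i k, ∀ᵐ ω ∂μ,
      (μ[(fun ω' => ‖g i k ω' - gradient Ff (X i (k : ℕ) ω')‖ ^ 2) |
          mixedFLPast gc g i k]) ω ≤ σ ^ 2)
    -- server update
    (xplus : Ω → E)
    (hxplus : xplus = fun ω =>
      x - (ηt / ((K : ℝ) * (S : ℝ))) • ∑ i : Fin S, ∑ k : Fin K, (g i k ω + gc ω))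
    -- client drift
    (drift : ℝ)
    (hdrift : drift = (1 / ((K : ℝ) * (S : ℝ))) *
      ∑ i : Fin S, ∑ k : Fin K, ∫ ω, ‖X i (k : ℕ) ω - x‖ ^ 2 ∂μ)
    -- smoothness of the federated loss
    (hFf_smooth : ∀ y z : E, ‖gradient Ff y - gradient Ff z‖ ≤ β * ‖y - z‖) :
    ∫ ω, ‖xplus ω - x‖ ^ 2 ∂μ
      ≤ 4 * ηt ^ 2 * β ^ 2 * drift
        + 2 * ηt ^ 2 * ((2 / ((K : ℝ) * (S : ℝ))) * σ ^ 2 + σc ^ 2)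
        + 2 * ηt ^ 2 * ‖gradient (fun y => Ff y + Fc y) x‖ ^ 2 :=
  owgt_variance_of_server_update_general μ x K S η ηt Ff Fc hFf_diff hFc_diff β σ σc gc hgc_meas
    hgc_L2 hgc_mean hgc_var g hg_meas hg_L2 X hX0 hXstep hg_condmean hg_condvar xplus hxplus drift
    hdrift hFf_smooth
end
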